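/- Let X and Y be finite sequences of vectors in R^l with lengths M and N divisible by k, and P max-pooling with window size and stride k. Then d_F(X, Y) − B ≤ d_F(P(X), P(Y)) ≤ d_F(X, Y) + B, where B = max_{1 ≤ i ≤ M/k} ||X_i^↓ − X_i^↑||_2 + max_{1 ≤ i ≤ N/k} ||Y_i^↓ − Y_i^↑||_2. -/

import Mathlib

/-! The two pooled sequences are compared with the originals through couplings. A coupling of
`X` and `Y` maps block by block (`s ↦ s / k`) to a coupling of `pool X` and `pool Y`, and
conversely every coupling of the pooled sequences refines to a coupling of `X` and `Y` whose
pairs lie in the coupled blocks. Within a block every entry is coordinatewise between the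
block minimum and the block maximum, so replacing it by the block maximum moves it by at most
the block's gap; hence each matched distance changes by at most `B` in either direction. -/

open scoped BigOperators

instance finNonempty {n : ℕ} [NeZero n] : Nonempty (Fin n) :=
  ⟨⟨0, Nat.pos_of_ne_zero (NeZero.ne n)⟩⟩

instance neZeroMulNat {a b : ℕ} [NeZero a] [NeZero b] : NeZero (a * b) :=
  ⟨Nat.mul_ne_zero (NeZero.ne a) (NeZero.ne b)⟩

/-- The last index of `Fin n`. -/
def lastIdx (n : ℕ) [NeZero n] : Fin n :=
  ⟨n - 1, by have := Nat.pos_of_ne_zero (NeZero.ne n); omega⟩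

/-- A monotone coupling between the index sets of two finite sequences:
it starts at the pair of first indices, ends at the pair of last indices,
and each index advances by at most one per step. -/
def IsCoupling {M N : ℕ} [NeZero M] [NeZero N] (L : List (Fin M × Fin N)) : Prop :=
  L.head? = some (0, 0) ∧
  L.getLast? = some (lastIdx M, lastIdx N) ∧
  L.Chain' fun p q =>
    (q.1.val = p.1.val ∨ q.1.val = p.1.val + 1) ∧
    (q.2.val = p.2.val ∨ q.2.val = p.2.val + 1)

/-- The maximum matched distance of a coupling. -/
noncomputable def couplingCost {α : Type*} [PseudoMetricSpace α] {M N : ℕ}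
    (x : Fin M → α) (y : Fin N → α) (L : List (Fin M × Fin N)) : ℝ :=
  (L.map fun p => dist (x p.1) (y p.2)).foldr max 0

/-- The discrete Fréchet distance between two finite sequences. -/
noncomputable def dFrechet {α : Type*} [PseudoMetricSpace α] {M N : ℕ} [NeZero M] [NeZero N]
    (x : Fin M → α) (y : Fin N → α) : ℝ :=
  sInf {r | ∃ L, IsCoupling L ∧ couplingCost x y L = r}

/-- The global index of the `t`-th element of the `i`-th pooling block. -/
def blockIdx {a k : ℕ} (i : Fin a) (t : Fin k) : Fin (a * k) :=
  ⟨i.val * k + t.val, by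
    have h1 := t.isLt
    have h2 : i.val + 1 ≤ a := i.isLt
    calc i.val * k + t.val < i.val * k + k := by omega
      _ = (i.val + 1) * k := by ring
      _ ≤ a * k := Nat.mul_le_mul_right k h2⟩

/-- Coordinate-wise 1D max-pooling with window size `k` and stride `k`. -/
noncomputable def pool {l a k : ℕ} [NeZero k] (X : Fin (a * k) → EuclideanSpace ℝ (Fin l)) :
    Fin a → EuclideanSpace ℝ (Fin l) :=
  fun i => (WithLp.equiv 2 (Fin l → ℝ)).symm fun j =>
    Finset.univ.sup' Finset.univ_nonempty fun t : Fin k => X (blockIdx i t) j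

/-- The coordinate-wise minimum vector of the `i`-th pooling block. -/
noncomputable def blockMin {l a k : ℕ} [NeZero k] (X : Fin (a * k) → EuclideanSpace ℝ (Fin l)) :
    Fin a → EuclideanSpace ℝ (Fin l) :=
  fun i => (WithLp.equiv 2 (Fin l → ℝ)).symm fun j =>
    Finset.univ.inf' Finset.univ_nonempty fun t : Fin k => X (blockIdx i t) j

section Coupling

variable {M N : ℕ}

def IsStep {n : ℕ} (i j : Fin n) : Prop :=
  j.val = i.val ∨ j.val = i.val + 1

def IsPairStep (p q : Fin M × Fin N) : Prop :=
  IsStep p.1 q.1 ∧ IsStep p.2 q.2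

theorem isCoupling_iff [NeZero M] [NeZero N] {L : List (Fin M × Fin N)} :
    IsCoupling L ↔ L.head? = some (0, 0) ∧ L.getLast? = some (lastIdx M, lastIdx N) ∧
      L.IsChain IsPairStep :=
  Iff.rfl

theorem List.head?_ofFn_of_neZero {β : Type*} {n : ℕ} [NeZero n] (f : Fin n → β) :
    (List.ofFn f).head? = some (f 0) := by
  simp [List.head?_eq_getElem?, NeZero.pos n]

theorem List.getLast?_ofFn_of_neZero {β : Type*} {n : ℕ} [NeZero n] (f : Fin n → β) :
    (List.ofFn f).getLast? = some (f (lastIdx n)) := by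
  simp [List.getLast?_eq_getElem?, lastIdx, NeZero.pos n]

theorem exists_isCoupling [NeZero M] [NeZero N] : ∃ L : List (Fin M × Fin N), IsCoupling L := by
  have hM := NeZero.pos M
  have hN := NeZero.pos N
  have : NeZero (max M N) := ⟨by omega⟩
  refine ⟨List.ofFn fun t : Fin (max M N) =>
    ((⟨min t (M - 1), by omega⟩ : Fin M), (⟨min t (N - 1), by omega⟩ : Fin N)),
    isCoupling_iff.2 ⟨?_, ?_, ?_⟩⟩
  · rw [List.head?_ofFn_of_neZero]
    simp
  · rw [List.getLast?_ofFn_of_neZero]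
    simp only [lastIdx, Option.some.injEq, Prod.mk.injEq, Fin.mk.injEq]
    omega
  · rw [List.isChain_ofFn]
    intro t ht
    simp only [IsPairStep, IsStep]
    omega

end Coupling

section Frechet

variable {α : Type*} [PseudoMetricSpace α] {M N : ℕ} (x : Fin M → α) (y : Fin N → α)

theorem couplingCost_nonneg (L : List (Fin M × Fin N)) : 0 ≤ couplingCost x y L := by
  induction L with
  | nil => exact le_rfl
  | cons p L ih => exact le_max_of_le_right ih

theorem dist_le_couplingCost {L : List (Fin M × Fin N)} {p : Fin M × Fin N} (hp : p ∈ L) :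
    dist (x p.1) (y p.2) ≤ couplingCost x y L :=
  List.le_max_of_le' 0 (List.mem_map_of_mem hp) le_rfl

theorem couplingCost_le {L : List (Fin M × Fin N)} {C : ℝ} (hC : 0 ≤ C)
    (h : ∀ p ∈ L, dist (x p.1) (y p.2) ≤ C) : couplingCost x y L ≤ C := by
  induction L with
  | nil => exact hC
  | cons p L ih =>
    exact max_le (h p List.mem_cons_self) (ih fun q hq => h q (List.mem_cons_of_mem p hq))

variable [NeZero M] [NeZero N]

theorem dFrechet_le_couplingCost {L : List (Fin M × Fin N)} (hL : IsCoupling L) :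
    dFrechet x y ≤ couplingCost x y L :=
  csInf_le ⟨0, by rintro _ ⟨L, -, rfl⟩; exact couplingCost_nonneg x y L⟩ ⟨L, hL, rfl⟩

theorem le_dFrechet {c : ℝ}
    (h : ∀ L : List (Fin M × Fin N), IsCoupling L → c ≤ couplingCost x y L) :
    c ≤ dFrechet x y := by
  obtain ⟨L, hL⟩ := exists_isCoupling (M := M) (N := N)
  refine le_csInf ⟨_, L, hL, rfl⟩ ?_
  rintro _ ⟨L, hL, rfl⟩
  exact h L hL

theorem dFrechet_le_dFrechet_add {M' N' : ℕ} [NeZero M'] [NeZero N']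
    {x' : Fin M' → α} {y' : Fin N' → α} {ε δ : ℝ} (hε : 0 ≤ ε) (hδ : 0 ≤ δ)
    (h : ∀ L' : List (Fin M' × Fin N'), IsCoupling L' → ∃ L : List (Fin M × Fin N),
      IsCoupling L ∧
        ∀ p ∈ L, ∃ q ∈ L', dist (x p.1) (x' q.1) ≤ ε ∧ dist (y p.2) (y' q.2) ≤ δ) :
    dFrechet x y ≤ dFrechet x' y' + (ε + δ) := by
  suffices ∀ L', IsCoupling L' → dFrechet x y - (ε + δ) ≤ couplingCost x' y' L' by
    linarith [le_dFrechet x' y' this]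
  intro L' hL'
  obtain ⟨L, hL, hclose⟩ := h L' hL'
  have hcost : couplingCost x y L ≤ couplingCost x' y' L' + (ε + δ) := by
    refine couplingCost_le x y (by linarith [couplingCost_nonneg x' y' L']) fun p hp => ?_
    obtain ⟨q, hq, hx, hy⟩ := hclose p hp
    calc dist (x p.1) (y p.2)
        ≤ dist (x p.1) (x' q.1) + dist (x' q.1) (y' q.2) + dist (y' q.2) (y p.2) :=
          dist_triangle4 _ _ _ _
      _ ≤ couplingCost x' y' L' + (ε + δ) := by
          linarith [dist_le_couplingCost x' y' hq, dist_comm (y p.2) (y' q.2)]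
  linarith [dFrechet_le_couplingCost x y hL]

end Frechet

section Blocks

variable {a b k : ℕ}

theorem blockIdx_eq_mkDivMod (i : Fin a) (t : Fin k) : blockIdx i t = Fin.mkDivMod i t := by
  ext
  simp [blockIdx, Nat.mul_comm]

@[simp]
theorem divNat_blockIdx (i : Fin a) (t : Fin k) : (blockIdx i t).divNat = i := by
  rw [blockIdx_eq_mkDivMod, Fin.divNat_mkDivMod]

theorem blockIdx_divNat_modNat (s : Fin (a * k)) : blockIdx s.divNat s.modNat = s := by
  rw [blockIdx_eq_mkDivMod, Fin.divNat_mkDivMod_modNat]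

theorem IsStep.divNat {s s' : Fin (a * k)} (h : IsStep s s') : IsStep s.divNat s'.divNat := by
  unfold IsStep at h ⊢
  rcases h with h | h
  · exact Or.inl (by simp [h])
  · simp only [Fin.coe_divNat, h, Nat.succ_div]
    split_ifs <;> simp

theorem blockIdx_zero_zero [NeZero a] [NeZero k] : blockIdx (0 : Fin a) (0 : Fin k) = 0 := by
  ext
  simp [blockIdx]

theorem blockIdx_lastIdx_lastIdx [NeZero a] [NeZero k] :
    blockIdx (lastIdx a) (lastIdx k) = lastIdx (a * k) := by
  have hk : k ≤ a * k := Nat.le_mul_of_pos_left k (NeZero.pos a)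
  have := NeZero.pos k
  ext
  simp only [blockIdx, lastIdx, Nat.sub_one_mul]
  omega

theorem IsCoupling.map_divNat [NeZero a] [NeZero b] [NeZero k]
    {L : List (Fin (a * k) × Fin (b * k))} (hL : IsCoupling L) :
    IsCoupling (L.map fun p => (p.1.divNat, p.2.divNat)) := by
  obtain ⟨hhead, hlast, hchain⟩ := isCoupling_iff.1 hL
  refine isCoupling_iff.2 ⟨?_, ?_, ?_⟩
  · simp [hhead, ← blockIdx_zero_zero (a := a) (k := k),
      ← blockIdx_zero_zero (a := b) (k := k)]
  · simp [hlast, ← blockIdx_lastIdx_lastIdx]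
  · rw [List.isChain_map]
    exact hchain.imp fun p q h => ⟨h.1.divNat, h.2.divNat⟩

variable [NeZero k]

theorem isStep_blockIdx_ite_lastIdx {i j : Fin a} (h : IsStep i j) :
    IsStep (blockIdx i (if i = j then 0 else lastIdx k)) (blockIdx j 0) := by
  split_ifs with hij
  · exact Or.inl (by rw [hij])
  · have hj : j.val = i.val + 1 := h.resolve_left fun h' => hij (Fin.ext h'.symm)
    have := NeZero.pos k
    right
    simp only [blockIdx, lastIdx, hj, Nat.succ_mul, Fin.val_zero]
    omega

/-- The `k` fine pairs inside the block pair `c`; a coordinate whose block does not advance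
at the next coarse step stays at the start of its block, the other one runs through it. -/
def blockPath (c : Fin a × Fin b) (stay₁ stay₂ : Prop) [Decidable stay₁]
    [Decidable stay₂] : List (Fin (a * k) × Fin (b * k)) :=
  List.ofFn fun t =>
    (blockIdx c.1 (if stay₁ then 0 else t), blockIdx c.2 (if stay₂ then 0 else t))

variable (c : Fin a × Fin b) (stay₁ stay₂ : Prop) [Decidable stay₁] [Decidable stay₂]

theorem isChain_blockPath : (blockPath (k := k) c stay₁ stay₂).IsChain IsPairStep := by
  rw [blockPath, List.isChain_ofFn]
  intro t ht
  constructor <;> split_ifs <;> simp [IsStep, blockIdx, Nat.add_assoc]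

theorem head?_blockPath :
    (blockPath (k := k) c stay₁ stay₂).head? = some (blockIdx c.1 0, blockIdx c.2 0) := by
  rw [blockPath, List.head?_ofFn_of_neZero]
  simp

theorem getLast?_blockPath :
    (blockPath (k := k) c stay₁ stay₂).getLast? = some
      (blockIdx c.1 (if stay₁ then 0 else lastIdx k),
        blockIdx c.2 (if stay₂ then 0 else lastIdx k)) := by
  rw [blockPath, List.getLast?_ofFn_of_neZero]

theorem divNat_of_mem_blockPath {p : Fin (a * k) × Fin (b * k)}
    (hp : p ∈ blockPath c stay₁ stay₂) : (p.1.divNat, p.2.divNat) = c := by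
  obtain ⟨t, rfl⟩ := List.mem_ofFn.1 hp
  simp

theorem exists_refinement_of_isChain (L : List (Fin a × Fin b))
    (hL : (c :: L).IsChain IsPairStep) :
    ∃ F : List (Fin (a * k) × Fin (b * k)), F.IsChain IsPairStep ∧
      F.head? = some (blockIdx c.1 0, blockIdx c.2 0) ∧
      F.getLast? =
        (c :: L).getLast?.map (fun e => (blockIdx e.1 (lastIdx k), blockIdx e.2 (lastIdx k))) ∧
      ∀ p ∈ F, (p.1.divNat, p.2.divNat) ∈ c :: L := by
  induction L generalizing c with
  | nil =>
    refine ⟨blockPath c False False, isChain_blockPath .., head?_blockPath .., ?_, ?_⟩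
    · simp [getLast?_blockPath]
    · intro p hp
      rw [divNat_of_mem_blockPath c False False hp]
      exact List.mem_singleton_self c
  | cons d L ih =>
    obtain ⟨hcd, hL⟩ := List.isChain_cons_cons.1 hL
    obtain ⟨F, hF, hhead, hlast, hmem⟩ := ih d hL
    refine ⟨blockPath c (c.1 = d.1) (c.2 = d.2) ++ F, ?_, ?_, ?_, ?_⟩
    · refine (isChain_blockPath ..).append hF ?_
      rw [getLast?_blockPath, hhead]
      rintro _ ⟨⟩ _ ⟨⟩
      exact ⟨isStep_blockIdx_ite_lastIdx hcd.1, isStep_blockIdx_ite_lastIdx hcd.2⟩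
    · rw [List.head?_append, head?_blockPath]
      rfl
    · rw [List.getLast?_append, hlast, List.getLast?_cons_cons]
      simp [List.getLast?_cons]
    · intro p hp
      rcases List.mem_append.1 hp with hp | hp
      · rw [divNat_of_mem_blockPath _ _ _ hp]
        exact List.mem_cons_self
      · exact List.mem_cons_of_mem c (hmem p hp)

theorem IsCoupling.exists_refinement [NeZero a] [NeZero b] {L : List (Fin a × Fin b)}
    (hL : IsCoupling L) :
    ∃ F : List (Fin (a * k) × Fin (b * k)),
      IsCoupling F ∧ ∀ p ∈ F, (p.1.divNat, p.2.divNat) ∈ L := by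
  obtain ⟨hhead, hlast, hchain⟩ := isCoupling_iff.1 hL
  rcases L with _ | ⟨c, L⟩
  · simp at hhead
  obtain rfl : c = (0, 0) := by simpa using hhead
  obtain ⟨F, hF, hFhead, hFlast, hmem⟩ := exists_refinement_of_isChain (k := k) _ L hchain
  refine ⟨F, isCoupling_iff.2 ⟨?_, ?_, hF⟩, hmem⟩
  · rw [hFhead, blockIdx_zero_zero, blockIdx_zero_zero]
  · rw [hFlast, hlast, Option.map_some, blockIdx_lastIdx_lastIdx, blockIdx_lastIdx_lastIdx]

end Blocks

theorem EuclideanSpace.dist_le_norm_sub_of_le_of_le {ι : Type*} [Fintype ι]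
    {u v w : EuclideanSpace ℝ ι} (huv : ∀ j, u j ≤ v j) (hvw : ∀ j, v j ≤ w j) :
    dist v w ≤ ‖u - w‖ := by
  rw [dist_eq_norm, EuclideanSpace.norm_eq, EuclideanSpace.norm_eq]
  refine Real.sqrt_le_sqrt (Finset.sum_le_sum fun j _ => ?_)
  simp only [PiLp.sub_apply, Real.norm_eq_abs, sq_abs]
  nlinarith [huv j, hvw j]

section Pooling

variable {l a k : ℕ} [NeZero k] (X : Fin (a * k) → EuclideanSpace ℝ (Fin l))

theorem blockMin_divNat_le (s : Fin (a * k)) (j : Fin l) : blockMin X s.divNat j ≤ X s j := by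
  conv_rhs => rw [← blockIdx_divNat_modNat s]
  exact Finset.inf'_le (fun t => X (blockIdx s.divNat t) j) (Finset.mem_univ _)

theorem le_pool_divNat (s : Fin (a * k)) (j : Fin l) : X s j ≤ pool X s.divNat j := by
  conv_lhs => rw [← blockIdx_divNat_modNat s]
  exact Finset.le_sup' (fun t => X (blockIdx s.divNat t) j) (Finset.mem_univ _)

variable [NeZero a]

noncomputable def maxBlockGap : ℝ :=
  Finset.univ.sup' Finset.univ_nonempty fun i : Fin a => ‖blockMin X i - pool X i‖

theorem maxBlockGap_nonneg : 0 ≤ maxBlockGap X :=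
  (norm_nonneg _).trans
    (Finset.le_sup' (fun i => ‖blockMin X i - pool X i‖) (Finset.mem_univ 0))

theorem dist_pool_divNat_le_maxBlockGap (s : Fin (a * k)) :
    dist (X s) (pool X s.divNat) ≤ maxBlockGap X :=
  (EuclideanSpace.dist_le_norm_sub_of_le_of_le (blockMin_divNat_le X s) (le_pool_divNat X s)).trans
    (Finset.le_sup' (fun i => ‖blockMin X i - pool X i‖) (Finset.mem_univ _))

end Pooling

theorem pooling_two_sided_bound {l a b k : ℕ} [NeZero a] [NeZero b] [NeZero k]
    (X : Fin (a * k) → EuclideanSpace ℝ (Fin l))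
    (Y : Fin (b * k) → EuclideanSpace ℝ (Fin l)) (B : ℝ)
    (hB : B = (Finset.univ.sup' Finset.univ_nonempty fun i : Fin a =>
        ‖blockMin X i - pool X i‖) +
      (Finset.univ.sup' Finset.univ_nonempty fun i : Fin b =>
        ‖blockMin Y i - pool Y i‖)) :
    dFrechet X Y - B ≤ dFrechet (pool X) (pool Y) ∧
    dFrechet (pool X) (pool Y) ≤ dFrechet X Y + B := by
  obtain rfl : B = maxBlockGap X + maxBlockGap Y := hB
  have hX := dist_pool_divNat_le_maxBlockGap X
  have hY := dist_pool_divNat_le_maxBlockGap Y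
  constructor
  · have := dFrechet_le_dFrechet_add X Y (x' := pool X) (y' := pool Y)
      (maxBlockGap_nonneg X) (maxBlockGap_nonneg Y)
      fun L hL => by
        obtain ⟨F, hF, hmem⟩ := hL.exists_refinement (k := k)
        exact ⟨F, hF, fun p hp => ⟨_, hmem p hp, hX p.1, hY p.2⟩⟩
    linarith
  · have := dFrechet_le_dFrechet_add (pool X) (pool Y) (x' := X) (y' := Y)
      (maxBlockGap_nonneg X) (maxBlockGap_nonneg Y)
      fun L hL => ⟨_, hL.map_divNat, fun p hp => by
        obtain ⟨q, hq, rfl⟩ := List.mem_map.1 hp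
        exact ⟨q, hq, dist_comm (X q.1) _ ▸ hX q.1, dist_comm (Y q.2) _ ▸ hY q.2⟩⟩
    linarith
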